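/- Let G be a connected graph with adjacency eigenvalues λ₁ ≥ ⋯ ≥ λₙ, λ = max{|λ₂|,|λₙ|}, and normalized Perron eigenvector ν. Suppose P = {C₁,…,C_m} is an equitable partition of G and S ⊆ C_i, T ⊆ C_j for some i, j. Then, with ν_S and ν_T the constant values of ν on C_i and C_j respectively, |e(S,T) − λ₁|S||T|ν_Sν_T| ≤ λ·sqrt(|S||T|(1 − |S|ν_S²)(1 − |T|ν_T²)). -/

import Mathlib

open Matrix Finset

/-
The Perron vector `ν` spans the `λ₁`-eigenspace of a connected graph (a nonnegative
`λ₁`-eigenvector vanishing somewhere vanishes on all neighbours, hence everywhere), so every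
other eigenvalue is bounded by `λ` in absolute value. Splitting `f = (f ⬝ ν) ν + x` with
`x ⊥ ν`, the bilinear form `f ⬝ A g` is `λ₁ (f ⬝ ν)(g ⬝ ν) + x ⬝ A y`, and expanding `x ⬝ A y`
in an orthonormal eigenbasis and applying Cauchy–Schwarz bounds the error by
`λ ‖x‖ ‖y‖ = λ √(‖f‖² - (f ⬝ ν)²) √(‖g‖² - (g ⬝ ν)²)`. For `f = 1_S`, `g = 1_T` with `ν`
constant on `S` and on `T` these quantities are `|S| νS`, `|S|`, `|T| νT`, `|T|`.
-/

lemma Antitone.abs_le_max_abs {α : Type*} [Preorder α] {f : α → ℝ} (hf : Antitone f)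
    {a b k : α} (hak : a ≤ k) (hkb : k ≤ b) : |f k| ≤ max |f a| |f b| := by
  rw [abs_le]
  constructor
  · linarith [le_max_right |f a| |f b|, neg_abs_le (f b), hf hkb]
  · linarith [le_max_left |f a| |f b|, le_abs_self (f a), hf hak]

lemma Finset.ite_mem_dotProduct_eq_card_mul {V R : Type*} [Fintype V] [DecidableEq V]
    [Semiring R] {s : Finset V} {f : V → R} {a : R} (hf : ∀ u ∈ s, f u = a) :
    (fun u => if u ∈ s then (1 : R) else 0) ⬝ᵥ f = #s * a := by
  simp only [dotProduct, ite_mul, one_mul, zero_mul]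
  rw [sum_ite_mem, univ_inter, sum_congr rfl hf, sum_const, nsmul_eq_mul]

lemma Matrix.sub_smul_dotProduct_self {n : Type*} [Fintype n] {ν : n → ℝ} (hνν : ν ⬝ᵥ ν = 1)
    (f : n → ℝ) : (f - (f ⬝ᵥ ν) • ν) ⬝ᵥ (f - (f ⬝ᵥ ν) • ν) = f ⬝ᵥ f - (f ⬝ᵥ ν) ^ 2 := by
  simp only [dotProduct_sub, sub_dotProduct, smul_dotProduct, dotProduct_smul, dotProduct_comm ν f,
    hνν, smul_eq_mul]
  ring

namespace SimpleGraph

variable {V : Type*} [Fintype V] {G : SimpleGraph V} [DecidableRel G.Adj]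

lemma eq_zero_of_adj_of_adjMatrix_mulVec_apply_eq_zero {z : V → ℝ} (hnn : 0 ≤ z) {u v : V}
    (hu : (G.adjMatrix ℝ *ᵥ z) u = 0) (huv : G.Adj u v) : z v = 0 := by
  rw [adjMatrix_mulVec_apply] at hu
  exact (sum_eq_zero_iff_of_nonneg fun w _ => hnn w).mp hu v ((mem_neighborFinset G u v).mpr huv)

theorem Connected.eq_zero_of_adjMatrix_mulVec_eq_smul (hG : G.Connected) {c : ℝ} {z : V → ℝ}
    (hz : G.adjMatrix ℝ *ᵥ z = c • z) (hnn : 0 ≤ z) {u : V} (hu : z u = 0) : z = 0 := by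
  have propagate : ∀ {v w : V} (p : G.Walk v w), z v = 0 → z w = 0 := by
    intro v w p
    induction p with
    | nil => exact id
    | cons hadj _ ih =>
      exact fun hv => ih (eq_zero_of_adj_of_adjMatrix_mulVec_apply_eq_zero hnn
        (by rw [hz, Pi.smul_apply, hv, smul_zero]) hadj)
  funext w
  exact propagate (hG.preconnected u w).some hu

theorem Connected.exists_eq_smul_of_adjMatrix_mulVec_eq_smul (hG : G.Connected) {c : ℝ}
    {ν w : V → ℝ} (hνpos : ∀ v, 0 < ν v) (hν : G.adjMatrix ℝ *ᵥ ν = c • ν)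
    (hw : G.adjMatrix ℝ *ᵥ w = c • w) : ∃ t : ℝ, w = t • ν := by
  have := hG.nonempty
  obtain ⟨u, -, hu⟩ := exists_min_image univ (fun v => w v / ν v) univ_nonempty
  refine ⟨w u / ν u, sub_eq_zero.mp ?_⟩
  -- `w - t • ν` is a nonnegative eigenvector vanishing at the minimiser `u` of `w / ν`
  refine hG.eq_zero_of_adjMatrix_mulVec_eq_smul (c := c) (u := u) ?_ (fun v => ?_) ?_
  · rw [mulVec_sub, mulVec_smul, hw, hν, smul_sub, smul_comm]
  · simpa using (le_div_iff₀ (hνpos v)).mp (hu v (mem_univ v))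
  · simp [div_mul_cancel₀ _ (hνpos u).ne']

end SimpleGraph

namespace Matrix.IsHermitian

variable {n : Type*} [Fintype n] {A : Matrix n n ℝ}

lemma dotProduct_mulVec_comm (hA : A.IsHermitian) (x y : n → ℝ) :
    x ⬝ᵥ (A *ᵥ y) = (A *ᵥ x) ⬝ᵥ y := by
  rw [dotProduct_mulVec, ← mulVec_transpose, ← conjTranspose_eq_transpose_of_trivial, hA.eq]

variable [DecidableEq n] (hA : A.IsHermitian)

lemma dotProduct_eq_sum_eigenvectorBasis (x y : n → ℝ) :
    x ⬝ᵥ y = ∑ k, (⇑(hA.eigenvectorBasis k) ⬝ᵥ x) * (⇑(hA.eigenvectorBasis k) ⬝ᵥ y) := by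
  have := (hA.eigenvectorBasis).sum_inner_mul_inner (WithLp.toLp 2 x) (WithLp.toLp 2 y)
  simp only [EuclideanSpace.inner_eq_star_dotProduct, star_trivial, dotProduct_comm y] at this
  exact this.symm

lemma dotProduct_mulVec_eq_sum_eigenvalues (x y : n → ℝ) :
    x ⬝ᵥ (A *ᵥ y) = ∑ k, hA.eigenvalues k *
      ((⇑(hA.eigenvectorBasis k) ⬝ᵥ x) * (⇑(hA.eigenvectorBasis k) ⬝ᵥ y)) := by
  rw [hA.dotProduct_eq_sum_eigenvectorBasis]
  refine sum_congr rfl fun k _ => ?_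
  rw [hA.dotProduct_mulVec_comm, hA.mulVec_eigenvectorBasis, smul_dotProduct, smul_eq_mul]
  ring

lemma dotProduct_self_eq_sum_sq (x : n → ℝ) :
    x ⬝ᵥ x = ∑ k, (⇑(hA.eigenvectorBasis k) ⬝ᵥ x) ^ 2 := by
  simp only [hA.dotProduct_eq_sum_eigenvectorBasis x x, sq]

theorem abs_dotProduct_mulVec_le {ν : n → ℝ} {c r : ℝ} (hr : 0 ≤ r)
    (hsimple : ∀ w, A *ᵥ w = c • w → ∃ t : ℝ, w = t • ν)
    (hbound : ∀ k, hA.eigenvalues k ≠ c → |hA.eigenvalues k| ≤ r)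
    {x y : n → ℝ} (hx : x ⬝ᵥ ν = 0) :
    |x ⬝ᵥ (A *ᵥ y)| ≤ r * (√(x ⬝ᵥ x) * √(y ⬝ᵥ y)) := by
  set b := hA.eigenvectorBasis
  have hterm : ∀ k, |hA.eigenvalues k * ((⇑(b k) ⬝ᵥ x) * (⇑(b k) ⬝ᵥ y))|
      ≤ r * (|⇑(b k) ⬝ᵥ x| * |⇑(b k) ⬝ᵥ y|) := by
    intro k
    by_cases hk : hA.eigenvalues k = c
    · obtain ⟨t, ht⟩ := hsimple _ (hk ▸ hA.mulVec_eigenvectorBasis k)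
      have hbx : ⇑(b k) ⬝ᵥ x = 0 := by rw [ht, smul_dotProduct, dotProduct_comm, hx, smul_zero]
      simp [hbx]
    · rw [abs_mul, abs_mul]
      exact mul_le_mul_of_nonneg_right (hbound k hk) (by positivity)
  have hCS : ∑ k, |⇑(b k) ⬝ᵥ x| * |⇑(b k) ⬝ᵥ y| ≤ √(x ⬝ᵥ x) * √(y ⬝ᵥ y) := by
    rw [hA.dotProduct_self_eq_sum_sq x, hA.dotProduct_self_eq_sum_sq y]
    simpa only [sq_abs] using
      Real.sum_mul_le_sqrt_mul_sqrt univ (fun k => |⇑(b k) ⬝ᵥ x|) (fun k => |⇑(b k) ⬝ᵥ y|)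
  calc |x ⬝ᵥ (A *ᵥ y)| ≤ ∑ k, |hA.eigenvalues k * ((⇑(b k) ⬝ᵥ x) * (⇑(b k) ⬝ᵥ y))| := by
        rw [hA.dotProduct_mulVec_eq_sum_eigenvalues]; exact abs_sum_le_sum_abs _ _
    _ ≤ ∑ k, r * (|⇑(b k) ⬝ᵥ x| * |⇑(b k) ⬝ᵥ y|) := sum_le_sum fun k _ => hterm k
    _ ≤ r * (√(x ⬝ᵥ x) * √(y ⬝ᵥ y)) := by rw [← mul_sum]; exact mul_le_mul_of_nonneg_left hCS hr

/-- The expander mixing lemma. -/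
theorem abs_dotProduct_mulVec_sub_le {ν : n → ℝ} (hνν : ν ⬝ᵥ ν = 1) {c r : ℝ}
    (hν : A *ᵥ ν = c • ν) (hr : 0 ≤ r) (hsimple : ∀ w, A *ᵥ w = c • w → ∃ t : ℝ, w = t • ν)
    (hbound : ∀ k, hA.eigenvalues k ≠ c → |hA.eigenvalues k| ≤ r) (f g : n → ℝ) :
    |f ⬝ᵥ (A *ᵥ g) - c * (f ⬝ᵥ ν) * (g ⬝ᵥ ν)|
      ≤ r * √((f ⬝ᵥ f - (f ⬝ᵥ ν) ^ 2) * (g ⬝ᵥ g - (g ⬝ᵥ ν) ^ 2)) := by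
  set x := f - (f ⬝ᵥ ν) • ν
  set y := g - (g ⬝ᵥ ν) • ν
  have hx : x ⬝ᵥ ν = 0 := by simp [x, hνν]
  have hxx : x ⬝ᵥ x = f ⬝ᵥ f - (f ⬝ᵥ ν) ^ 2 := sub_smul_dotProduct_self hνν f
  have hyy : y ⬝ᵥ y = g ⬝ᵥ g - (g ⬝ᵥ ν) ^ 2 := sub_smul_dotProduct_self hνν g
  have hνAg : ν ⬝ᵥ (A *ᵥ g) = c * (g ⬝ᵥ ν) := by
    rw [hA.dotProduct_mulVec_comm, hν, smul_dotProduct, smul_eq_mul, dotProduct_comm]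
  have hxAy : x ⬝ᵥ (A *ᵥ y) = f ⬝ᵥ (A *ᵥ g) - c * (f ⬝ᵥ ν) * (g ⬝ᵥ ν) := by
    simp only [x, y, mulVec_sub, mulVec_smul, hν, dotProduct_sub, sub_dotProduct, smul_dotProduct,
      dotProduct_smul, hνAg, hνν, smul_eq_mul]
    ring
  rw [← hxAy, ← hxx, ← hyy, Real.sqrt_mul (by simpa using dotProduct_self_star_nonneg x)]
  exact hA.abs_dotProduct_mulVec_le hr hsimple hbound hx

end Matrix.IsHermitian

/-- **Perron EML for sets inside cells of an equitable partition.**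
`part : Fin n → Fin m` assigns each vertex its cell; the partition is equitable if
any two vertices in the same cell have the same number of neighbours in each cell.
The Perron eigenvector is then constant on cells, with values `νS` on the cell of `S`
and `νT` on the cell of `T`. -/
theorem perron_eml_equitable {n m : ℕ} (hn : 2 ≤ n)
    (G : SimpleGraph (Fin n)) [DecidableRel G.Adj] (hG : G.Connected)
    (A : Matrix (Fin n) (Fin n) ℝ) (hA : A = G.adjMatrix ℝ)
    (hAH : A.IsHermitian)
    (lam : Fin n → ℝ) (hmono : Antitone lam)
    (heig : ∃ e : Fin n ≃ Fin n, ∀ i, lam i = hAH.eigenvalues (e i))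
    (ν : Fin n → ℝ) (hνpos : ∀ i, 0 < ν i) (hνnorm : ∑ i, ν i ^ 2 = 1)
    (hνeig : A *ᵥ ν = lam ⟨0, by omega⟩ • ν)
    (lamAbs : ℝ)
    (hlamAbs : lamAbs = max |lam ⟨1, by omega⟩| |lam ⟨n - 1, by omega⟩|)
    (part : Fin n → Fin m)
    (i j : Fin m) (S T : Finset (Fin n))
    (hS : ∀ u ∈ S, part u = i) (hT : ∀ u ∈ T, part u = j)
    (νS νT : ℝ)
    (hνS : ∀ u, part u = i → ν u = νS) (hνT : ∀ u, part u = j → ν u = νT) :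
    |(fun u => if u ∈ S then (1 : ℝ) else 0) ⬝ᵥ
        (A *ᵥ fun u => if u ∈ T then (1 : ℝ) else 0)
      - lam ⟨0, by omega⟩ * S.card * T.card * νS * νT|
      ≤ lamAbs * Real.sqrt ((S.card : ℝ) * T.card *
          (1 - S.card * νS ^ 2) * (1 - T.card * νT ^ 2)) := by
  subst hA hlamAbs
  obtain ⟨e, he⟩ := heig
  have hνν : ν ⬝ᵥ ν = 1 := by simpa only [dotProduct, sq] using hνnorm
  have hsimple (w : Fin n → ℝ) (hw : G.adjMatrix ℝ *ᵥ w = lam ⟨0, by omega⟩ • w) :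
      ∃ t : ℝ, w = t • ν :=
    hG.exists_eq_smul_of_adjMatrix_mulVec_eq_smul hνpos hνeig hw
  have hbound (k : Fin n) (hk : hAH.eigenvalues k ≠ lam ⟨0, by omega⟩) :
      |hAH.eigenvalues k| ≤ max |lam ⟨1, by omega⟩| |lam ⟨n - 1, by omega⟩| := by
    obtain ⟨k, rfl⟩ := e.surjective k
    rw [← he] at hk ⊢
    have hk0 : k.val ≠ 0 := fun h => hk (congrArg lam (Fin.ext h))
    exact hmono.abs_le_max_abs (Fin.le_def.mpr (Nat.one_le_iff_ne_zero.mpr hk0))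
      (Fin.le_def.mpr (Nat.le_sub_one_of_lt k.isLt))
  have hSν := ite_mem_dotProduct_eq_card_mul fun u hu => hνS u (hS u hu)
  have hTν := ite_mem_dotProduct_eq_card_mul fun u hu => hνT u (hT u hu)
  have hSS := ite_mem_dotProduct_eq_card_mul (f := fun u => if u ∈ S then (1 : ℝ) else 0)
    fun u hu => if_pos hu
  have hTT := ite_mem_dotProduct_eq_card_mul (f := fun u => if u ∈ T then (1 : ℝ) else 0)
    fun u hu => if_pos hu
  have := hAH.abs_dotProduct_mulVec_sub_le hνν hνeig ((abs_nonneg _).trans (le_max_left _ _))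
    hsimple hbound (fun u => if u ∈ S then 1 else 0) (fun u => if u ∈ T then 1 else 0)
  rw [hSν, hTν, hSS, hTT] at this
  convert this using 3 <;> ring
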